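/- arXiv:1711.03848 — 2 statements merged into one kernel-verified Lean document; each statement's English description precedes it below -/
import Mathlib

section
/- Let n ≥ 1, α ∈ [0,1], and let a_0, …, a_n be independent real-valued random variables with P(a_i > 0) = α and P(a_i < 0) = 1 − α for every i. Then the probability p_{n,n} that the sequence (a_0, …, a_n) has the maximal number n of sign changes equals (α(1−α))^{n/2} if n is even, and 2·(α(1−α))^{(n+1)/2} if n is odd. -/
open MeasureTheory ProbabilityTheory
open scoped ENNReal

/-- Number of sign changes of the sequence `a 0, a 1, …, a N` (there are `N`
consecutive pairs): the number of indices `0 ≤ i ≤ N - 1` with `a i * a (i+1) < 0`. -/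
noncomputable def signChanges {Ω : Type*} (a : ℕ → Ω → ℝ) (N : ℕ) (ω : Ω) : ℕ :=
  ((Finset.range N).filter fun i => a i ω * a (i + 1) ω < 0).card

/-!
A sequence of reals has the maximal number `n` of sign changes exactly when its signs alternate;
since then `a 0 ≠ 0`, this splits into the two disjoint patterns `+ - + - …` and `- + - + …`.
By independence the first has probability `α ^ ⌈(n+1)/2⌉ (1-α) ^ ⌊(n+1)/2⌋` and the second the same
with `α` and `1 - α` exchanged. Adding them, `α + (1 - α) = 1` collapses the sum to
`(α(1-α)) ^ (n/2)` for even `n`, while for odd `n` both terms equal `(α(1-α)) ^ ((n+1)/2)`.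
-/

open Set

lemma Finset.prod_range_ite_even {M : Type*} [CommMonoid M] (x y : M) (m : ℕ) :
    ∏ i ∈ Finset.range m, (if Even i then x else y) = x ^ ((m + 1) / 2) * y ^ (m / 2) := by
  induction m with
  | zero => simp
  | succ m ih =>
    rw [Finset.prod_range_succ, ih]
    obtain ⟨k, rfl | rfl⟩ := Nat.even_or_odd' m
    · have h₁ : (2 * k + 1) / 2 = k := by omega
      have h₂ : (2 * k + 1 + 1) / 2 = k + 1 := by omega
      simp only [even_two_mul, if_true, h₁, h₂, Nat.mul_div_cancel_left k two_pos, pow_succ]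
      ac_rfl
    · have h₁ : (2 * k + 1 + 1) / 2 = k + 1 := by omega
      have h₂ : (2 * k + 1 + 1 + 1) / 2 = k + 1 := by omega
      have h₃ : (2 * k + 1) / 2 = k := by omega
      simp only [Nat.not_even_bit1, if_false, h₁, h₂, h₃, pow_succ]
      ac_rfl

lemma pow_mul_pow_add_pow_mul_pow {R : Type*} [CommSemiring R] (p q : R) (n : ℕ) :
    p ^ ((n + 2) / 2) * q ^ ((n + 1) / 2) + q ^ ((n + 2) / 2) * p ^ ((n + 1) / 2) =
      if Even n then (p * q) ^ (n / 2) * (p + q) else 2 * (p * q) ^ ((n + 1) / 2) := by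
  obtain ⟨k, rfl | rfl⟩ := Nat.even_or_odd' n
  · have h₁ : (2 * k + 2) / 2 = k + 1 := by omega
    have h₂ : (2 * k + 1) / 2 = k := by omega
    rw [if_pos (even_two_mul k), h₁, h₂, Nat.mul_div_cancel_left k two_pos]
    ring
  · have h₁ : (2 * k + 1 + 2) / 2 = k + 1 := by omega
    have h₂ : (2 * k + 1 + 1) / 2 = k + 1 := by omega
    rw [if_neg (Nat.not_even_bit1 k), h₁, h₂]
    ring

lemma signChanges_eq_self_iff {Ω : Type*} (a : ℕ → Ω → ℝ) (N : ℕ) (ω : Ω) :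
    signChanges a N ω = N ↔ ∀ i < N, a i ω * a (i + 1) ω < 0 := by
  simpa [signChanges] using Finset.card_filter_eq_iff (s := Finset.range N)
    (p := fun i => a i ω * a (i + 1) ω < 0)

lemma ite_even_succ {α : Type*} (x y : α) (i : ℕ) :
    (if Even (i + 1) then x else y) = if Even i then y else x := by
  simp only [Nat.even_add_one, ite_not]

lemma mul_succ_neg_iff_of_pos {b : ℕ → ℝ} (h₀ : 0 < b 0) (n : ℕ) :
    (∀ i < n, b i * b (i + 1) < 0) ↔ ∀ i ≤ n, b i ∈ (if Even i then Ioi 0 else Iio 0 : Set ℝ) := by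
  constructor
  · intro hb i hi
    induction i with
    | zero => simpa using h₀
    | succ i ih =>
      have hbi := ih (by omega)
      rw [ite_even_succ]
      split_ifs at hbi ⊢
      · exact neg_of_mul_neg_right (hb i hi) (le_of_lt hbi)
      · exact pos_of_mul_neg_right (hb i hi) (le_of_lt hbi)
  · intro hb i hi
    have hbi := hb i hi.le
    have hbi' := hb (i + 1) hi
    rw [ite_even_succ] at hbi'
    split_ifs at hbi hbi'
    · exact mul_neg_of_pos_of_neg hbi hbi'
    · exact mul_neg_of_neg_of_pos hbi hbi'

lemma mul_succ_neg_iff (b : ℕ → ℝ) {n : ℕ} (hn : 1 ≤ n) :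
    (∀ i < n, b i * b (i + 1) < 0) ↔
      (∀ i ≤ n, b i ∈ (if Even i then Ioi 0 else Iio 0 : Set ℝ)) ∨
        ∀ i ≤ n, b i ∈ (if Even i then Iio 0 else Ioi 0 : Set ℝ) := by
  have hswap : (∀ i ≤ n, b i ∈ (if Even i then Iio 0 else Ioi 0 : Set ℝ)) ↔
      ∀ i ≤ n, -b i ∈ (if Even i then Ioi 0 else Iio 0 : Set ℝ) :=
    forall₂_congr fun i _ => by split_ifs <;> simp
  have hprod : (∀ i < n, b i * b (i + 1) < 0) ↔ ∀ i < n, -b i * -b (i + 1) < 0 := by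
    simp only [neg_mul_neg]
  rw [hswap]
  constructor
  · intro hb
    rcases (left_ne_zero_of_mul (hb 0 hn).ne).lt_or_gt with h₀ | h₀
    · exact .inr ((mul_succ_neg_iff_of_pos (b := (-b ·)) (neg_pos.2 h₀) n).1 (hprod.1 hb))
    · exact .inl ((mul_succ_neg_iff_of_pos h₀ n).1 hb)
  · rintro (hb | hb)
    · exact (mul_succ_neg_iff_of_pos (by simpa using hb 0 n.zero_le) n).2 hb
    · have h₀ : 0 < -b 0 := by simpa using hb 0 n.zero_le
      exact hprod.2 ((mul_succ_neg_iff_of_pos (b := (-b ·)) h₀ n).2 hb)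

section AlternatingEvent

variable {Ω β : Type*}

def alternatingEvent (a : ℕ → Ω → β) (n : ℕ) (s t : Set β) : Set Ω :=
  {ω | ∀ i ≤ n, a i ω ∈ if Even i then s else t}

lemma alternatingEvent_eq_iInter (a : ℕ → Ω → β) (n : ℕ) (s t : Set β) :
    alternatingEvent a n s t = ⋂ i : Fin (n + 1), a i ⁻¹' (if Even (i : ℕ) then s else t) := by
  ext ω
  simp [alternatingEvent, Fin.forall_iff]

lemma measurableSet_alternatingEvent [MeasurableSpace Ω] [MeasurableSpace β] {a : ℕ → Ω → β}
    (ha : ∀ i, Measurable (a i)) (n : ℕ) {s t : Set β} (hs : MeasurableSet s)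
    (ht : MeasurableSet t) : MeasurableSet (alternatingEvent a n s t) := by
  rw [alternatingEvent_eq_iInter]
  exact .iInter fun i => ha i (by split_ifs <;> assumption)

lemma disjoint_alternatingEvent (a : ℕ → Ω → β) (n : ℕ) {s t : Set β} (hst : Disjoint s t) :
    Disjoint (alternatingEvent a n s t) (alternatingEvent a n t s) :=
  Set.disjoint_left.2 fun _ hs ht =>
    hst.notMem_of_mem_left (by simpa using hs 0 n.zero_le) (by simpa using ht 0 n.zero_le)

lemma measure_alternatingEvent [MeasurableSpace Ω] [MeasurableSpace β] {μ : Measure Ω}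
    {a : ℕ → Ω → β} {n : ℕ}
    (hindep : iIndepFun (fun i : Fin (n + 1) => a i) μ) {s t : Set β}
    (hs : MeasurableSet s) (ht : MeasurableSet t) {x y : ℝ≥0∞}
    (hx : ∀ i ≤ n, μ (a i ⁻¹' s) = x) (hy : ∀ i ≤ n, μ (a i ⁻¹' t) = y) :
    μ (alternatingEvent a n s t) = x ^ ((n + 2) / 2) * y ^ ((n + 1) / 2) := by
  have hfactor (i : Fin (n + 1)) :
      μ (a i ⁻¹' (if Even (i : ℕ) then s else t)) = if Even (i : ℕ) then x else y := by
    split_ifs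
    exacts [hx i i.is_le, hy i i.is_le]
  rw [alternatingEvent_eq_iInter,
    hindep.meas_iInter fun i => ⟨_, by split_ifs <;> assumption, rfl⟩,
    Finset.prod_congr rfl fun i _ => hfactor i,
    Fin.prod_univ_eq_prod_range (fun i => if Even i then x else y), Finset.prod_range_ite_even]

end AlternatingEvent

lemma setOf_signChanges_eq_self {Ω : Type*} (a : ℕ → Ω → ℝ) {n : ℕ} (hn : 1 ≤ n) :
    {ω | signChanges a n ω = n} =
      alternatingEvent a n (Ioi 0) (Iio 0) ∪ alternatingEvent a n (Iio 0) (Ioi 0) := by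
  ext ω
  exact (signChanges_eq_self_iff a n ω).trans (mul_succ_neg_iff (a · ω) hn)

/-- If `a 0, …, a n` are independent real random variables with `P(a i > 0) = α`
and `P(a i < 0) = 1 − α`, then the probability `p_{n,n}` that `(a 0, …, a n)` has
the maximal number `n` of sign changes equals `(α(1−α))^{n/2}` if `n` is even and
`2·(α(1−α))^{(n+1)/2}` if `n` is odd. -/
theorem prob_max_signChanges
    {Ω : Type*} [MeasurableSpace Ω] (μ : Measure Ω) [IsProbabilityMeasure μ]
    (n : ℕ) (hn : 1 ≤ n) (α : ℝ) (hα : α ∈ Set.Icc (0 : ℝ) 1) (a : ℕ → Ω → ℝ)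
    (hmeas : ∀ i, Measurable (a i))
    (hindep : iIndepFun
      (fun i : Fin (n + 1) => a i) μ)
    (hpos : ∀ i ≤ n, μ {ω | 0 < a i ω} = ENNReal.ofReal α)
    (hneg : ∀ i ≤ n, μ {ω | a i ω < 0} = ENNReal.ofReal (1 - α)) :
    μ {ω | signChanges a n ω = n} =
      if Even n then ENNReal.ofReal ((α * (1 - α)) ^ (n / 2))
      else ENNReal.ofReal (2 * (α * (1 - α)) ^ ((n + 1) / 2)) := by
  obtain ⟨hα₀, hα₁⟩ := hα
  have hβ₀ : 0 ≤ 1 - α := sub_nonneg.2 hα₁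
  rw [setOf_signChanges_eq_self a hn,
    measure_union (disjoint_alternatingEvent a n Ioi_disjoint_Iio_same)
      (measurableSet_alternatingEvent hmeas n measurableSet_Iio measurableSet_Ioi),
    measure_alternatingEvent hindep measurableSet_Ioi measurableSet_Iio hpos hneg,
    measure_alternatingEvent hindep measurableSet_Iio measurableSet_Ioi hneg hpos,
    pow_mul_pow_add_pow_mul_pow, ← ENNReal.ofReal_add hα₀ hβ₀, add_sub_cancel, ENNReal.ofReal_one,
    mul_one, ← ENNReal.ofReal_mul hα₀]
  simp only [← ENNReal.ofReal_pow (mul_nonneg hα₀ hβ₀), ENNReal.ofReal_mul zero_le_two,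
    ENNReal.ofReal_ofNat]
end

section
/- Let n ≥ 1, α ∈ (0,1), and let a_0, …, a_n be independent real-valued random variables with P(a_i > 0) = α and P(a_i < 0) = 1 − α for every i. Then the probability p_{n−1,n} that (a_0, …, a_n) has exactly n−1 sign changes equals n·(α(1−α))^{n/2} if n is even, and (α(1−α))^{(n+1)/2}·[ ((n+1)/2)·( α/(1−α) + (1−α)/α ) + (n−1) ] if n is odd. -/
/-!
Almost surely no `a i` vanishes, so the event is determined by the sign pattern
`(sign a 0, …, sign a n)`. Exactly `n - 1` changes among the `n` consecutive pairs means the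
pattern alternates except for one repetition `sign a j = sign a (j + 1)`, `j < n`; such a
pattern is fixed by `j` and its first sign, so there are `2n` of them. By independence each has
probability `q(σ₀) ⋯ q(σₙ)`, where `q` is `α` on `+` and `1 - α` on `-`; dropping the repeated
entry leaves an alternating pattern of length `n`, whose weight is a power of `α` times a power
of `1 - α`. Summing over `j` and the first sign gives the formula.
-/

open MeasureTheory ProbabilityTheory

open Finset

def alternating (b : Bool) (k : ℕ) : Bool := xor b (decide (Odd k))

lemma alternating_succ (b : Bool) (k : ℕ) : alternating b (k + 1) = !alternating b k := by
  simp only [alternating, Nat.odd_add_one, decide_not, Bool.xor_not]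

@[to_additive]
lemma prod_range_alternating {M : Type*} [CommMonoid M] (f : Bool → M) (b : Bool) (n : ℕ) :
    ∏ k ∈ range n, f (alternating b k) = f (!b) ^ (n / 2) * f b ^ ((n + 1) / 2) := by
  induction n using Nat.twoStepInduction with
  | zero => simp
  | one => simp [alternating]
  | more n ih _ =>
    have hpair : ∀ c, f c * f (!c) = f b * f (!b) := by
      intro c; cases c <;> cases b <;> simp [mul_comm]
    rw [prod_range_succ, prod_range_succ, ih, mul_assoc, alternating_succ, hpair,
      show (n + 2) / 2 = n / 2 + 1 by omega, show (n + 2 + 1) / 2 = (n + 1) / 2 + 1 by omega,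
      pow_succ, pow_succ]
    ac_rfl

/-- The sign pattern `b, !b, b, …` with the single repetition at positions `j, j + 1`. -/
def alternatingWithRepeat (j : ℕ) (b : Bool) (i : ℕ) : Bool :=
  alternating b (if i ≤ j then i else i - 1)

lemma alternatingWithRepeat_zero (j : ℕ) (b : Bool) : alternatingWithRepeat j b 0 = b := by
  simp [alternatingWithRepeat, alternating]

lemma alternatingWithRepeat_succ_eq_iff (j : ℕ) (b : Bool) (i : ℕ) :
    alternatingWithRepeat j b (i + 1) = alternatingWithRepeat j b i ↔ i = j := by
  unfold alternatingWithRepeat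
  rcases lt_trichotomy i j with h | rfl | h
  · rw [if_pos (show i + 1 ≤ j from h), if_pos h.le, alternating_succ]
    simp [h.ne]
  · simp
  · rw [if_neg (by omega), if_neg (by omega), show i + 1 - 1 = (i - 1) + 1 by omega,
      alternating_succ]
    simp [h.ne']

lemma eq_alternatingWithRepeat {s : ℕ → Bool} {n j : ℕ}
    (h : ∀ i < n, (s (i + 1) = s i ↔ i = j)) : ∀ i ≤ n, s i = alternatingWithRepeat j (s 0) i
  | 0, _ => (alternatingWithRepeat_zero j _).symm
  | i + 1, hi => by
    have ih := eq_alternatingWithRepeat h i (by omega)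
    have key : s (i + 1) = s i ↔ alternatingWithRepeat j (s 0) (i + 1) = s i := by
      rw [h i (by omega), ih, alternatingWithRepeat_succ_eq_iff]
    revert key
    cases s (i + 1) <;> cases s i <;> cases alternatingWithRepeat j (s 0) (i + 1) <;> simp

lemma eq_and_eq_of_forall_alternatingWithRepeat_eq {n j j' : ℕ} {b b' : Bool} (hj : j < n)
    (h : ∀ i ≤ n, alternatingWithRepeat j b i = alternatingWithRepeat j' b' i) :
    j = j' ∧ b = b' := by
  refine ⟨?_, by simpa only [alternatingWithRepeat_zero] using h 0 (Nat.zero_le n)⟩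
  rw [← alternatingWithRepeat_succ_eq_iff j' b', ← h j hj.le, ← h (j + 1) hj,
    alternatingWithRepeat_succ_eq_iff]

lemma card_filter_ne_succ_add_one_eq_iff (s : ℕ → Bool) (n : ℕ) :
    #{i ∈ range n | s i ≠ s (i + 1)} + 1 = n ↔
      ∃ j < n, ∃ b, ∀ i ≤ n, s i = alternatingWithRepeat j b i := by
  constructor
  · intro hcard
    have hsplit := card_filter_add_card_filter_not (s := range n) (fun i => s i ≠ s (i + 1))
    obtain ⟨j, hj⟩ : ∃ j, {i ∈ range n | ¬s i ≠ s (i + 1)} = {j} :=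
      card_eq_one.1 (by rw [card_range] at hsplit; omega)
    have hmem : ∀ i, i < n ∧ s i = s (i + 1) ↔ i = j := by
      simpa [Finset.ext_iff] using hj
    refine ⟨j, ((hmem j).2 rfl).1, s 0, eq_alternatingWithRepeat fun i hi => ?_⟩
    rw [eq_comm, ← hmem i]
    exact (and_iff_right hi).symm
  · rintro ⟨j, hj, b, hs⟩
    have hne : ∀ i < n, s i ≠ s (i + 1) ↔ i ≠ j := fun i hi => by
      rw [hs i hi.le, hs (i + 1) hi, ne_comm, ne_eq, alternatingWithRepeat_succ_eq_iff]
    have : {i ∈ range n | s i ≠ s (i + 1)} = (range n).erase j := by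
      ext i
      simp only [mem_filter, mem_erase, mem_range]
      exact ⟨fun ⟨hi, h⟩ => ⟨(hne i hi).1 h, hi⟩, fun ⟨h, hi⟩ => ⟨hi, (hne i hi).2 h⟩⟩
    rw [this, card_erase_of_mem (mem_range.2 hj), card_range]
    omega

lemma prod_range_succ_comp_ite {M : Type*} [CommMonoid M] (g : ℕ → M) {j n : ℕ} (hj : j < n) :
    ∏ i ∈ range (n + 1), g (if i ≤ j then i else i - 1) = g j * ∏ k ∈ range n, g k := by
  induction n, hj using Nat.le_induction with
  | base =>
    rw [prod_range_succ, if_neg (by omega), Nat.add_sub_cancel, mul_comm]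
    congr 1
    exact prod_congr rfl fun i hi => by rw [if_pos (Nat.lt_succ_iff.1 (mem_range.1 hi))]
  | succ n hjn ih =>
    rw [prod_range_succ, ih, if_neg (by omega), Nat.add_sub_cancel, prod_range_succ, mul_assoc]

lemma prod_range_succ_alternatingWithRepeat {M : Type*} [CommMonoid M] (f : Bool → M) (b : Bool)
    {j n : ℕ} (hj : j < n) :
    ∏ i ∈ range (n + 1), f (alternatingWithRepeat j b i) =
      f (alternating b j) * ∏ k ∈ range n, f (alternating b k) :=
  prod_range_succ_comp_ite (fun k => f (alternating b k)) hj

lemma sum_prod_alternatingWithRepeat {R : Type*} [CommSemiring R] (f : Bool → R) (n : ℕ) :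
    ∑ p ∈ range n ×ˢ univ, ∏ i ∈ range (n + 1), f (alternatingWithRepeat p.1 p.2 i) =
      ∑ b, ((n / 2 : ℕ) * f (!b) + ((n + 1) / 2 : ℕ) * f b) *
        (f (!b) ^ (n / 2) * f b ^ ((n + 1) / 2)) := by
  rw [sum_product_right]
  refine sum_congr rfl fun b _ => ?_
  rw [sum_congr rfl fun j hj => prod_range_succ_alternatingWithRepeat f b (mem_range.1 hj),
    ← sum_mul, sum_range_alternating, prod_range_alternating, nsmul_eq_mul, nsmul_eq_mul]

def signProb (α : ℝ) (b : Bool) : ℝ := if b then α else 1 - α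

lemma sum_prod_signProb_alternatingWithRepeat {α : ℝ} (hα0 : α ≠ 0) (hα1 : 1 - α ≠ 0) (n : ℕ) :
    ∑ p ∈ range n ×ˢ univ, ∏ i ∈ range (n + 1), signProb α (alternatingWithRepeat p.1 p.2 i) =
      if Even n then (n : ℝ) * (α * (1 - α)) ^ (n / 2)
      else (α * (1 - α)) ^ ((n + 1) / 2) *
        (((n : ℝ) + 1) / 2 * (α / (1 - α) + (1 - α) / α) + ((n : ℝ) - 1)) := by
  rw [sum_prod_alternatingWithRepeat, Fintype.sum_bool]
  simp only [signProb, Bool.not_true, Bool.not_false, if_true, Bool.false_eq_true, if_false]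
  rcases Nat.even_or_odd' n with ⟨m, rfl | rfl⟩
  · rw [if_pos (even_two_mul m), show 2 * m / 2 = m by omega, show (2 * m + 1) / 2 = m by omega]
    push_cast
    rw [mul_pow]
    ring
  · rw [if_neg (Nat.not_even_iff_odd.2 (odd_two_mul_add_one m)),
      show (2 * m + 1) / 2 = m by omega, show (2 * m + 1 + 1) / 2 = m + 1 by omega]
    push_cast
    rw [mul_pow]
    field_simp
    ring

def signSet : Bool → Set ℝ
  | true => Set.Ioi 0
  | false => Set.Iio 0

lemma measurableSet_signSet (b : Bool) : MeasurableSet (signSet b) := by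
  cases b
  exacts [measurableSet_Iio, measurableSet_Ioi]

lemma mem_signSet {x : ℝ} {b : Bool} : x ∈ signSet b ↔ x ≠ 0 ∧ decide (0 < x) = b := by
  cases b <;> simp only [signSet, Set.mem_Iio, Set.mem_Ioi, decide_eq_false_iff_not,
    decide_eq_true_eq, not_lt]
  · exact ⟨fun h => ⟨h.ne, h.le⟩, fun h => lt_of_le_of_ne h.2 h.1⟩
  · exact ⟨fun h => ⟨h.ne', h⟩, And.right⟩

lemma mul_neg_iff_decide_pos_ne {x y : ℝ} (hx : x ≠ 0) (hy : y ≠ 0) :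
    x * y < 0 ↔ decide (0 < x) ≠ decide (0 < y) := by
  rcases hx.lt_or_gt with hx | hx <;> rcases hy.lt_or_gt with hy | hy
  · simp [hx.not_gt, hy.not_gt, (mul_pos_of_neg_of_neg hx hy).not_gt]
  · simp [hx.not_gt, hy, mul_neg_of_neg_of_pos hx hy]
  · simp [hx, hy.not_gt, mul_neg_of_pos_of_neg hx hy]
  · simp [hx, hy, (mul_pos hx hy).not_gt]

section SignEvent

variable {Ω : Type*} (a : ℕ → Ω → ℝ) (n : ℕ)

def signEvent (σ : ℕ → Bool) : Set Ω := {ω | ∀ i ≤ n, a i ω ∈ signSet (σ i)}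

lemma signChanges_add_one_eq_iff {ω : Ω} (h : ∀ i ≤ n, a i ω ≠ 0) :
    signChanges a n ω + 1 = n ↔ ∃ j < n, ∃ b, ω ∈ signEvent a n (alternatingWithRepeat j b) := by
  have hcard : signChanges a n ω = #{i ∈ range n | decide (0 < a i ω) ≠ decide (0 < a (i + 1) ω)} :=
    congrArg card <| filter_congr fun i hi =>
      mul_neg_iff_decide_pos_ne (h i (mem_range.1 hi).le) (h (i + 1) (mem_range.1 hi))
  simp +contextual only [hcard, card_filter_ne_succ_add_one_eq_iff, signEvent, Set.mem_ofPred_eq,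
    mem_signSet, h, ne_eq, not_false_eq_true, true_and]

lemma disjoint_signEvent {σ τ : ℕ → Bool} (h : ∃ i ≤ n, σ i ≠ τ i) :
    Disjoint (signEvent a n σ) (signEvent a n τ) := by
  obtain ⟨i, hi, hne⟩ := h
  refine Set.disjoint_left.2 fun ω hσ hτ => hne ?_
  rw [← (mem_signSet.1 (hσ i hi)).2, ← (mem_signSet.1 (hτ i hi)).2]

lemma pairwiseDisjoint_signEvent_alternatingWithRepeat :
    Set.PairwiseDisjoint ((range n ×ˢ univ : Finset (ℕ × Bool)) : Set (ℕ × Bool))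
      fun p => signEvent a n (alternatingWithRepeat p.1 p.2) :=
  fun p hp q _ hpq => disjoint_signEvent a n <| by
    by_contra! h
    exact hpq <| Prod.ext_iff.2 <|
      eq_and_eq_of_forall_alternatingWithRepeat_eq (mem_range.1 (mem_product.1 hp).1) h

variable [MeasurableSpace Ω]

lemma setOf_signChanges_add_one_eq_ae_eq {μ : Measure Ω} (hne : ∀ᵐ ω ∂μ, ∀ i ≤ n, a i ω ≠ 0) :
    {ω | signChanges a n ω + 1 = n} =ᵐ[μ]
      ⋃ p ∈ range n ×ˢ univ, signEvent a n (alternatingWithRepeat p.1 p.2) := by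
  rw [Filter.eventuallyEq_set]
  filter_upwards [hne] with ω hω
  rw [signChanges_add_one_eq_iff a n hω]
  simp only [Set.mem_iUnion, exists_prop, mem_product, mem_range, mem_univ, and_true,
    Prod.exists, exists_and_left]

lemma measurableSet_signEvent (hmeas : ∀ i, Measurable (a i)) (σ : ℕ → Bool) :
    MeasurableSet (signEvent a n σ) := by
  simp only [signEvent, Set.ofPred_forall]
  exact .iInter fun i => .iInter fun _ => hmeas i (measurableSet_signSet (σ i))

lemma measure_signEvent {μ : Measure Ω} (hindep : iIndepFun (fun i : Fin (n + 1) => a i) μ)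
    {w : Bool → ℝ} (hw : ∀ b, 0 ≤ w b)
    (hsign : ∀ i ≤ n, ∀ b, μ (a i ⁻¹' signSet b) = ENNReal.ofReal (w b)) (σ : ℕ → Bool) :
    μ (signEvent a n σ) = ENNReal.ofReal (∏ i ∈ range (n + 1), w (σ i)) := by
  have hinter : signEvent a n σ = ⋂ i : Fin (n + 1), a i ⁻¹' signSet (σ i) := by
    ext ω
    simp only [signEvent, Set.mem_ofPred_eq, Set.mem_iInter, Set.mem_preimage]
    exact ⟨fun h i => h i (Nat.lt_succ_iff.1 i.isLt), fun h i hi => h ⟨i, Nat.lt_succ_of_le hi⟩⟩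
  rw [hinter, hindep.meas_iInter fun i => ⟨_, measurableSet_signSet (σ i), rfl⟩,
    ENNReal.ofReal_prod_of_nonneg fun i _ => hw _,
    ← Fin.prod_univ_eq_prod_range fun i => ENNReal.ofReal (w (σ i))]
  exact prod_congr rfl fun i _ => hsign i (Nat.lt_succ_iff.1 i.isLt) (σ i)

end SignEvent

lemma ae_ne_zero_of_measure_pos_add_measure_neg {Ω : Type*} [MeasurableSpace Ω] {μ : Measure Ω}
    [IsProbabilityMeasure μ] {X : Ω → ℝ} (hX : Measurable X)
    (h : μ {ω | 0 < X ω} + μ {ω | X ω < 0} = 1) : ∀ᵐ ω ∂μ, X ω ≠ 0 := by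
  have hpos : MeasurableSet {ω | 0 < X ω} := measurableSet_lt measurable_const hX
  have hneg : MeasurableSet {ω | X ω < 0} := measurableSet_lt hX measurable_const
  have hunion : {ω | X ω ≠ 0} = {ω | 0 < X ω} ∪ {ω | X ω < 0} := by
    ext ω
    exact ne_iff_lt_or_gt.trans or_comm
  rw [ae_iff_measure_eq (by rw [hunion]; exact (hpos.union hneg).nullMeasurableSet), hunion,
    measure_univ, ← h, measure_union _ hneg]
  exact Set.disjoint_left.2 fun ω (h1 : 0 < X ω) (h2 : X ω < 0) => lt_asymm h1 h2

/-- If `a 0, …, a n` are independent real random variables with `P(a i > 0) = α`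
and `P(a i < 0) = 1 − α`, `α ∈ (0,1)`, then the probability `p_{n−1,n}` that
`(a 0, …, a n)` has exactly `n − 1` sign changes equals `n·(α(1−α))^{n/2}` if `n`
is even, and `(α(1−α))^{(n+1)/2}·[ ((n+1)/2)·(α/(1−α) + (1−α)/α) + (n−1) ]` if `n`
is odd. -/
theorem prob_signChanges_n_sub_one
    {Ω : Type*} [MeasurableSpace Ω] (μ : Measure Ω) [IsProbabilityMeasure μ]
    (n : ℕ) (hn : 1 ≤ n) (α : ℝ) (hα : α ∈ Set.Ioo (0 : ℝ) 1) (a : ℕ → Ω → ℝ)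
    (hmeas : ∀ i, Measurable (a i))
    (hindep : iIndepFun
      (fun i : Fin (n + 1) => a i) μ)
    (hpos : ∀ i ≤ n, μ {ω | 0 < a i ω} = ENNReal.ofReal α)
    (hneg : ∀ i ≤ n, μ {ω | a i ω < 0} = ENNReal.ofReal (1 - α)) :
    μ {ω | signChanges a n ω = n - 1} =
      if Even n then ENNReal.ofReal ((n : ℝ) * (α * (1 - α)) ^ (n / 2))
      else ENNReal.ofReal ((α * (1 - α)) ^ ((n + 1) / 2) *
        (((n : ℝ) + 1) / 2 * (α / (1 - α) + (1 - α) / α) + ((n : ℝ) - 1))) := by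
  obtain ⟨hα0, hα1⟩ := hα
  have hw : ∀ b, 0 ≤ signProb α b := fun b => by cases b <;> simp [signProb] <;> linarith
  have hsign : ∀ i ≤ n, ∀ b, μ (a i ⁻¹' signSet b) = ENNReal.ofReal (signProb α b) := by
    intro i hi b; cases b; exacts [hneg i hi, hpos i hi]
  have hne : ∀ᵐ ω ∂μ, ∀ i ≤ n, a i ω ≠ 0 :=
    (Set.finite_le_nat n).eventually_all.2 fun i hi =>
      ae_ne_zero_of_measure_pos_add_measure_neg (hmeas i) <| by
        rw [hpos i hi, hneg i hi, ← ENNReal.ofReal_add hα0.le (by linarith), add_sub_cancel,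
          ENNReal.ofReal_one]
  have hset : {ω | signChanges a n ω = n - 1} = {ω | signChanges a n ω + 1 = n} := by
    ext ω
    simp only [Set.mem_ofPred_eq]
    omega
  rw [hset, measure_congr (setOf_signChanges_add_one_eq_ae_eq a n hne),
    measure_biUnion_finset (pairwiseDisjoint_signEvent_alternatingWithRepeat a n)
      fun p _ => measurableSet_signEvent a n hmeas _,
    sum_congr rfl fun p _ => measure_signEvent a n hindep hw hsign _,
    ← ENNReal.ofReal_sum_of_nonneg fun p _ => prod_nonneg fun i _ => hw _,
    sum_prod_signProb_alternatingWithRepeat hα0.ne' (by linarith), apply_ite ENNReal.ofReal]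
end
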